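/- arXiv:2201.08518 — 2 statements merged into one kernel-verified Lean document; each statement's English description precedes it below -/
import Mathlib

section
/- Let A be a bounded linear operator on a Banach space V with ‖A‖ ≤ 1 and ‖A^m‖ ≤ 1/2 for a positive integer m. Then for every α ∈ (0,1] and every natural number t, ‖((1−α)I + αA)^t‖ ≤ min{1, 2·(1 − α/(2m))^t}. -/
/-!
Split `A ^ k = (A ^ m) ^ (k / m) * A ^ (k % m)` to get `‖A ^ k‖ ≤ (1/2) ^ (k / m) ≤ 2 r ^ k` with
`r = 1 - 1/(2m)`, using Bernoulli's inequality `r ^ m ≥ 1/2`. A geometric bound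
`‖A ^ k‖ ≤ C r ^ k` passes to `B = (1 - α) I + α A` as `‖B ^ t‖ ≤ C (1 - α + α r) ^ t`: this is
the binomial expansion of `B ^ t`, organised as an induction on `t` bounding all `B ^ t A ^ j`.
Taking `C = r = 1` and `C = 2`, `r = 1 - 1/(2m)` gives the two halves of the minimum.
-/

section SeminormedRing

variable {R : Type*} [SeminormedRing R]

lemma norm_pow_le_pow_of_norm_le (h1 : ‖(1 : R)‖ ≤ 1) {b : R} {c : ℝ} (hb : ‖b‖ ≤ c) :
    ∀ n : ℕ, ‖b ^ n‖ ≤ c ^ n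
  | 0 => by simpa using h1
  | n + 1 => (norm_pow_le' b n.succ_pos).trans (pow_le_pow_left₀ (norm_nonneg b) hb _)

lemma norm_pow_le_half_pow_div (h1 : ‖(1 : R)‖ ≤ 1) {a : R} (ha : ‖a‖ ≤ 1) {m : ℕ}
    (ham : ‖a ^ m‖ ≤ 1 / 2) (k : ℕ) : ‖a ^ k‖ ≤ (1 / 2) ^ (k / m) :=
  calc ‖a ^ k‖ = ‖(a ^ m) ^ (k / m) * a ^ (k % m)‖ := by
        rw [← pow_mul, ← pow_add, Nat.div_add_mod]
    _ ≤ ‖(a ^ m) ^ (k / m)‖ * ‖a ^ (k % m)‖ := norm_mul_le _ _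
    _ ≤ (1 / 2) ^ (k / m) * 1 ^ (k % m) :=
        mul_le_mul (norm_pow_le_pow_of_norm_le h1 ham _) (norm_pow_le_pow_of_norm_le h1 ha _)
          (norm_nonneg _) (by positivity)
    _ = (1 / 2) ^ (k / m) := by rw [one_pow, mul_one]

lemma norm_pow_le_two_mul_pow (h1 : ‖(1 : R)‖ ≤ 1) {a : R} (ha : ‖a‖ ≤ 1) {m : ℕ}
    (hm : 0 < m) (ham : ‖a ^ m‖ ≤ 1 / 2) {r : ℝ} (hr0 : 0 ≤ r) (hr1 : r ≤ 1)
    (hrm : 1 / 2 ≤ r ^ m) (k : ℕ) :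
    ‖a ^ k‖ ≤ 2 * r ^ k := by
  have hk : k ≤ m * (k / m + 1) := (Nat.lt_mul_div_succ k hm).le
  calc ‖a ^ k‖ ≤ (1 / 2) ^ (k / m) := norm_pow_le_half_pow_div h1 ha ham k
    _ = 2 * (1 / 2) ^ (k / m + 1) := by ring
    _ ≤ 2 * (r ^ m) ^ (k / m + 1) := by gcongr
    _ ≤ 2 * r ^ k := by
        rw [← pow_mul]
        exact mul_le_mul_of_nonneg_left (pow_le_pow_of_le_one hr0 hr1 hk) two_pos.le

variable [NormedAlgebra ℝ R]

lemma norm_smul_one_add_smul_pow_mul_pow_le {a : R} {C r α β : ℝ} (hα : 0 ≤ α)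
    (hβ : 0 ≤ β) (h : ∀ k, ‖a ^ k‖ ≤ C * r ^ k) (t : ℕ) :
    ∀ j, ‖(β • 1 + α • a) ^ t * a ^ j‖ ≤ C * r ^ j * (β + α * r) ^ t := by
  induction t with
  | zero => simpa using h
  | succ t ih =>
    intro j
    have hstep : (β • 1 + α • a) * a ^ j = β • a ^ j + α • a ^ (j + 1) := by
      rw [add_mul, smul_mul_assoc, smul_mul_assoc, one_mul, pow_succ']
    calc ‖(β • 1 + α • a) ^ (t + 1) * a ^ j‖
        = ‖β • ((β • 1 + α • a) ^ t * a ^ j) +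
            α • ((β • 1 + α • a) ^ t * a ^ (j + 1))‖ := by
          rw [pow_succ, mul_assoc, hstep, mul_add, mul_smul_comm, mul_smul_comm]
      _ ≤ β * (C * r ^ j * (β + α * r) ^ t) + α * (C * r ^ (j + 1) * (β + α * r) ^ t) := by
          refine (norm_add_le _ _).trans (add_le_add ?_ ?_) <;>
            rw [norm_smul, Real.norm_of_nonneg (by assumption)] <;> gcongr
          exacts [ih j, ih (j + 1)]
      _ = C * r ^ j * (β + α * r) ^ (t + 1) := by ring

lemma norm_smul_one_add_smul_pow_le {a : R} {C r α β : ℝ} (hα : 0 ≤ α) (hβ : 0 ≤ β)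
    (h : ∀ k, ‖a ^ k‖ ≤ C * r ^ k) (t : ℕ) :
    ‖(β • 1 + α • a) ^ t‖ ≤ C * (β + α * r) ^ t := by
  simpa using norm_smul_one_add_smul_pow_mul_pow_le hα hβ h t 0

end SeminormedRing

lemma half_le_one_sub_one_div_two_mul_pow {m : ℕ} (hm : 1 ≤ m) :
    1 / 2 ≤ (1 - 1 / (2 * m : ℝ)) ^ m := by
  have hm' : (1 : ℝ) ≤ m := by exact_mod_cast hm
  have hinv : 1 / (2 * m : ℝ) ≤ 1 / 2 := by gcongr; linarith
  calc (1 / 2 : ℝ) = 1 + m * -(1 / (2 * m : ℝ)) := by field_simp; ring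
    _ ≤ (1 + -(1 / (2 * m : ℝ))) ^ m := one_add_mul_le_pow (by linarith) m
    _ = (1 - 1 / (2 * m : ℝ)) ^ m := by rw [← sub_eq_add_neg]

theorem stmt_2_general {V : Type*} [NormedAddCommGroup V] [NormedSpace ℝ V]
    (A : V →L[ℝ] V) (m : ℕ) (hm : 1 ≤ m)
    (h1 : ‖A‖ ≤ 1) (h2 : ‖A ^ m‖ ≤ 1 / 2)
    (α : ℝ) (hα0 : 0 < α) (hα1 : α ≤ 1) (t : ℕ) :
    ‖((1 - α) • (1 : V →L[ℝ] V) + α • A) ^ t‖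
      ≤ min 1 (2 * (1 - α / (2 * m)) ^ t) := by
  have hI : ‖(1 : V →L[ℝ] V)‖ ≤ 1 := ContinuousLinearMap.norm_id_le
  have hβ : 0 ≤ 1 - α := by linarith
  have hm' : (1 : ℝ) ≤ m := by exact_mod_cast hm
  have hinv_pos : 0 < 1 / (2 * m : ℝ) := by positivity
  have hinv_le : 1 / (2 * m : ℝ) ≤ 1 := by rw [div_le_one (by positivity)]; linarith
  have hA : ∀ k, ‖A ^ k‖ ≤ 2 * (1 - 1 / (2 * m : ℝ)) ^ k :=
    norm_pow_le_two_mul_pow hI h1 hm h2 (by linarith) (by linarith)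
      (half_le_one_sub_one_div_two_mul_pow hm)
  refine le_min ?_ ?_
  · simpa using norm_smul_one_add_smul_pow_le (r := 1) (C := 1) hα0.le hβ
      (by simpa using norm_pow_le_pow_of_norm_le hI h1) t
  · refine (norm_smul_one_add_smul_pow_le hα0.le hβ hA t).trans_eq ?_
    congr 2
    ring

/-- For a multi-step contraction `A` (`‖A‖ ≤ 1`, `‖A^m‖ ≤ 1/2`) and `α ∈ (0,1]`,
`‖((1-α)I + αA)^t‖ ≤ min {1, 2(1 - α/(2m))^t}`. -/
theorem stmt_2 {V : Type*} [NormedAddCommGroup V] [NormedSpace ℝ V] [CompleteSpace V]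
    (A : V →L[ℝ] V) (m : ℕ) (hm : 1 ≤ m)
    (h1 : ‖A‖ ≤ 1) (h2 : ‖A ^ m‖ ≤ 1 / 2)
    (α : ℝ) (hα0 : 0 < α) (hα1 : α ≤ 1) (t : ℕ) :
    ‖((1 - α) • (1 : V →L[ℝ] V) + α • A) ^ t‖
      ≤ min 1 (2 * (1 - α / (2 * m)) ^ t) :=
  stmt_2_general A m hm h1 h2 α hα0 hα1 t
end

section
/- In a finite-state finite-action discounted MDP with optimal Q-function θ* and Bellman optimality operator h, every Q-function θ satisfies the entrywise bound |θ* − θ| ≤ max{ |(I − γP^{π_θ})^{-1}(h(θ) − θ)|, |(I − γP^{π_*})^{-1}(h(θ) − θ)| }, where π_θ and π_* are greedy policies for θ and θ* respectively. In particular, ‖θ − θ*‖_∞ ≤ max over A ∈ {γP^{π_θ}, γP^{π_*}} of ‖(I − A)^{-1}(h(θ) − θ)‖_∞. -/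
/-! Both greedy policies turn the Bellman defect into a linear equation up to a signed error:
`h θ - θ = (I - γ P^{π_*}) (θ* - θ) + γ (P^{π_θ} - P^{π_*}) θ = (I - γ P^{π_θ}) (θ* - θ) + γ (P^{π_θ} - P^{π_*}) θ*`,
where the first error term is `≥ 0` because `π_θ` is greedy for `θ` and the second is `≤ 0`
because `π_*` is greedy for `θ*`. Since `γ P^π` is nonnegative with row sums `γ < 1`, the matrix
`(I - γ P^π)⁻¹` exists and is nonnegative (a discrete maximum principle), so `θ* - θ` is squeezed
between `(I - γ P^{π_θ})⁻¹ (h θ - θ)` and `(I - γ P^{π_*})⁻¹ (h θ - θ)`. -/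

open Finset Matrix

section Substochastic

variable {n : Type*} [Fintype n] [DecidableEq n] {B : Matrix n n ℝ}

theorem Matrix.nonneg_of_nonneg_one_sub_mulVec (hB0 : ∀ p q, 0 ≤ B p q)
    (hB1 : ∀ p, ∑ q, B p q < 1) {u : n → ℝ} (hu : 0 ≤ (1 - B) *ᵥ u) : 0 ≤ u := by
  by_contra hneg
  obtain ⟨p, hp⟩ : ∃ p, u p < 0 := by simpa [Pi.le_def] using hneg
  obtain ⟨p₀, -, hmin⟩ := exists_min_image univ u ⟨p, mem_univ p⟩
  have hup₀ : u p₀ < 0 := (hmin p (mem_univ p)).trans_lt hp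
  -- at a minimum of `u`, `((1 - B) *ᵥ u) p₀ ≤ (1 - ∑ q, B p₀ q) * u p₀ < 0`
  have hBu : (∑ q, B p₀ q) * u p₀ ≤ (B *ᵥ u) p₀ := by
    rw [sum_mul]
    exact sum_le_sum fun q _ => mul_le_mul_of_nonneg_left (hmin q (mem_univ q)) (hB0 p₀ q)
  have hu₀ : 0 ≤ u p₀ - (B *ᵥ u) p₀ := by
    simpa only [sub_mulVec, one_mulVec, Pi.sub_apply, Pi.zero_apply] using hu p₀
  nlinarith [hB1 p₀]

theorem Matrix.isUnit_det_one_sub (hB0 : ∀ p q, 0 ≤ B p q) (hB1 : ∀ p, ∑ q, B p q < 1) :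
    IsUnit (1 - B).det := by
  rw [isUnit_iff_ne_zero]
  intro hdet
  obtain ⟨v, hv, hBv⟩ := exists_mulVec_eq_zero_iff.mpr hdet
  have hpos := nonneg_of_nonneg_one_sub_mulVec hB0 hB1 hBv.ge
  have hneg := nonneg_of_nonneg_one_sub_mulVec hB0 hB1 (u := -v) (by rw [mulVec_neg, hBv, neg_zero])
  exact hv (le_antisymm (neg_nonneg.mp hneg) hpos)

theorem Matrix.one_sub_mulVec_inv_one_sub_mulVec (hB0 : ∀ p q, 0 ≤ B p q)
    (hB1 : ∀ p, ∑ q, B p q < 1) (w : n → ℝ) : (1 - B) *ᵥ ((1 - B)⁻¹ *ᵥ w) = w := by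
  rw [mulVec_mulVec, mul_nonsing_inv _ (isUnit_det_one_sub hB0 hB1), one_mulVec]

theorem Matrix.le_inv_one_sub_mulVec (hB0 : ∀ p q, 0 ≤ B p q) (hB1 : ∀ p, ∑ q, B p q < 1)
    {u w : n → ℝ} (h : (1 - B) *ᵥ u ≤ w) : u ≤ (1 - B)⁻¹ *ᵥ w := by
  refine sub_nonneg.mp (nonneg_of_nonneg_one_sub_mulVec hB0 hB1 ?_)
  rw [mulVec_sub, one_sub_mulVec_inv_one_sub_mulVec hB0 hB1]
  exact sub_nonneg.mpr h

theorem Matrix.inv_one_sub_mulVec_le (hB0 : ∀ p q, 0 ≤ B p q) (hB1 : ∀ p, ∑ q, B p q < 1)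
    {u w : n → ℝ} (h : w ≤ (1 - B) *ᵥ u) : (1 - B)⁻¹ *ᵥ w ≤ u := by
  refine sub_nonneg.mp (nonneg_of_nonneg_one_sub_mulVec hB0 hB1 ?_)
  rw [mulVec_sub, one_sub_mulVec_inv_one_sub_mulVec hB0 hB1]
  exact sub_nonneg.mpr h

end Substochastic

section BellmanDefect

variable {n : Type*} [Fintype n] [DecidableEq n] {Bθ Bs : Matrix n n ℝ} {r θ θs : n → ℝ}

theorem one_sub_mulVec_sub_le_defect (hfix : θs = r + Bs *ᵥ θs) (hθ : Bs *ᵥ θ ≤ Bθ *ᵥ θ) :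
    (1 - Bs) *ᵥ (θs - θ) ≤ r + Bθ *ᵥ θ - θ := by
  have hid : (1 - Bs) *ᵥ (θs - θ) = r + Bs *ᵥ θ - θ := by
    rw [sub_mulVec, one_mulVec, mulVec_sub]
    nth_rw 1 [hfix]
    abel
  rw [hid]
  gcongr

theorem defect_le_one_sub_mulVec_sub (hfix : θs = r + Bs *ᵥ θs) (hs : Bθ *ᵥ θs ≤ Bs *ᵥ θs) :
    r + Bθ *ᵥ θ - θ ≤ (1 - Bθ) *ᵥ (θs - θ) := by
  have hid : (1 - Bθ) *ᵥ (θs - θ) = r + Bθ *ᵥ θ - θ + (Bs *ᵥ θs - Bθ *ᵥ θs) := by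
    rw [sub_mulVec, one_mulVec, mulVec_sub]
    nth_rw 1 [hfix]
    abel
  rw [hid]
  exact le_add_of_nonneg_right (sub_nonneg.mpr hs)

end BellmanDefect

section MDP

variable {X A : Type*} [DecidableEq A] {P : X → A → X → ℝ} {γ : ℝ} {θ : X × A → ℝ} {π : X → A}

/-- The state–action transition matrix `P^π`: from `(x, a)` move to `x' ∼ P x a`, then play `π x'`. -/
def policyMatrix (P : X → A → X → ℝ) (π : X → A) : Matrix (X × A) (X × A) ℝ :=
  Matrix.of fun p q => if q.2 = π q.1 then P p.1 p.2 q.1 else 0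

def IsGreedy (θ : X × A → ℝ) (π : X → A) : Prop :=
  ∀ x a, θ (x, a) ≤ θ (x, π x)

theorem smul_policyMatrix_nonneg (hγ : 0 ≤ γ) (hP0 : ∀ x a x', 0 ≤ P x a x') (p q : X × A) :
    0 ≤ (γ • policyMatrix P π) p q := by
  simp only [Matrix.smul_apply, policyMatrix, of_apply, smul_eq_mul]
  split_ifs
  · exact mul_nonneg hγ (hP0 _ _ _)
  · rw [mul_zero]

variable [Fintype X] [Fintype A]

noncomputable def bellman [Nonempty A] (r : X × A → ℝ) (P : X → A → X → ℝ) (γ : ℝ)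
    (θ : X × A → ℝ) : X × A → ℝ :=
  fun p => r p + γ * ∑ x', P p.1 p.2 x' * univ.sup' univ_nonempty fun a => θ (x', a)

theorem policyMatrix_mulVec (P : X → A → X → ℝ) (π : X → A) (v : X × A → ℝ) (p : X × A) :
    (policyMatrix P π *ᵥ v) p = ∑ x', P p.1 p.2 x' * v (x', π x') := by
  simp only [mulVec, dotProduct, policyMatrix, of_apply, ite_mul, zero_mul,
    Fintype.sum_prod_type, sum_ite_eq', mem_univ, if_true]

theorem sum_smul_policyMatrix_row (hP1 : ∀ x a, ∑ x', P x a x' = 1) (p : X × A) :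
    ∑ q, (γ • policyMatrix P π) p q = γ := by
  have hrow := policyMatrix_mulVec P π (fun _ => 1) p
  simp only [mulVec, dotProduct, mul_one, hP1] at hrow
  simp only [Matrix.smul_apply, smul_eq_mul, ← mul_sum, hrow, mul_one]

theorem policyMatrix_mulVec_le_of_isGreedy (hP0 : ∀ x a x', 0 ≤ P x a x') (hπ : IsGreedy θ π)
    (σ : X → A) : policyMatrix P σ *ᵥ θ ≤ policyMatrix P π *ᵥ θ := fun p => by
  rw [policyMatrix_mulVec, policyMatrix_mulVec]
  exact sum_le_sum fun x' _ => mul_le_mul_of_nonneg_left (hπ x' (σ x')) (hP0 _ _ _)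

theorem bellman_eq_of_isGreedy [Nonempty A] (r : X × A → ℝ) (hπ : IsGreedy θ π) :
    bellman r P γ θ = r + (γ • policyMatrix P π) *ᵥ θ := by
  have hsup : ∀ x, (univ.sup' univ_nonempty fun a => θ (x, a)) = θ (x, π x) := fun x =>
    le_antisymm (sup'_le _ _ fun a _ => hπ x a) (le_sup' (fun a => θ (x, a)) (mem_univ (π x)))
  funext p
  simp only [bellman, hsup, Pi.add_apply, smul_mulVec, Pi.smul_apply, smul_eq_mul,
    policyMatrix_mulVec]

variable [DecidableEq X] [Nonempty A] {r θs : X × A → ℝ} {πθ πs : X → A}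

theorem inv_one_sub_mulVec_bellman_sub_le (hγ : 0 ≤ γ) (hγ1 : γ < 1)
    (hP0 : ∀ x a x', 0 ≤ P x a x') (hP1 : ∀ x a, ∑ x', P x a x' = 1)
    (hθ : IsGreedy θ πθ) (hs : IsGreedy θs πs) (hfix : bellman r P γ θs = θs) :
    (1 - γ • policyMatrix P πθ)⁻¹ *ᵥ (bellman r P γ θ - θ) ≤ θs - θ := by
  refine inv_one_sub_mulVec_le (smul_policyMatrix_nonneg hγ hP0)
    (fun p => (sum_smul_policyMatrix_row hP1 p).trans_lt hγ1) ?_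
  rw [bellman_eq_of_isGreedy r hθ]
  refine defect_le_one_sub_mulVec_sub (Bs := γ • policyMatrix P πs) ?_ ?_
  · rw [← bellman_eq_of_isGreedy r hs, hfix]
  · simp only [smul_mulVec]
    exact smul_le_smul_of_nonneg_left (policyMatrix_mulVec_le_of_isGreedy hP0 hs πθ) hγ

theorem sub_le_inv_one_sub_mulVec_bellman_sub (hγ : 0 ≤ γ) (hγ1 : γ < 1)
    (hP0 : ∀ x a x', 0 ≤ P x a x') (hP1 : ∀ x a, ∑ x', P x a x' = 1)
    (hθ : IsGreedy θ πθ) (hs : IsGreedy θs πs) (hfix : bellman r P γ θs = θs) :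
    θs - θ ≤ (1 - γ • policyMatrix P πs)⁻¹ *ᵥ (bellman r P γ θ - θ) := by
  refine le_inv_one_sub_mulVec (smul_policyMatrix_nonneg hγ hP0)
    (fun p => (sum_smul_policyMatrix_row hP1 p).trans_lt hγ1) ?_
  rw [bellman_eq_of_isGreedy r hθ]
  refine one_sub_mulVec_sub_le_defect ?_ ?_
  · rw [← bellman_eq_of_isGreedy r hs, hfix]
  · simp only [smul_mulVec]
    exact smul_le_smul_of_nonneg_left (policyMatrix_mulVec_le_of_isGreedy hP0 hθ πs) hγ

end MDP

/-- Local linearity for Q-learning: with `θs` the optimal Q-function (the Bellman fixed point)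
and `θ` any Q-function with greedy policy `π_θ`, one has entrywise
`|θs - θ| ≤ max |(I - γ M π_θ)⁻¹ (h θ - θ)| |(I - γ M π_s)⁻¹ (h θ - θ)|`, and in particular
the `ℓ∞` bound `‖θ - θs‖_∞ ≤ max of the two ‖(I - A)⁻¹(h θ - θ)‖_∞`. -/
theorem stmt_15 {X A : Type*} [Fintype X] [Fintype A] [DecidableEq X] [DecidableEq A]
    [Nonempty X] [Nonempty A]
    (r : X × A → ℝ) (P : X → A → X → ℝ) (γ : ℝ) (hγ0 : 0 < γ) (hγ1 : γ < 1)
    (hP0 : ∀ x a x', 0 ≤ P x a x') (hP1 : ∀ x a, ∑ x', P x a x' = 1)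
    (M : (X → A) → Matrix (X × A) (X × A) ℝ)
    (hM : ∀ (π : X → A) (p q : X × A),
      M π p q = if q.2 = π q.1 then P p.1 p.2 q.1 else 0)
    (θ θs : X × A → ℝ) (πθ πs : X → A)
    (hgreedyθ : ∀ x a, θ (x, a) ≤ θ (x, πθ x))
    (hgreedys : ∀ x a, θs (x, a) ≤ θs (x, πs x))
    (hθ : X × A → ℝ)
    (hdef : ∀ p : X × A, hθ p = r p + γ * ∑ x',
      P p.1 p.2 x' * Finset.univ.sup' Finset.univ_nonempty (fun a' => θ (x', a')))
    (hfix : ∀ p : X × A, θs p = r p + γ * ∑ x',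
      P p.1 p.2 x' * Finset.univ.sup' Finset.univ_nonempty (fun a' => θs (x', a'))) :
    (∀ p : X × A, |θs p - θ p| ≤
      max |(1 - γ • M πθ)⁻¹.mulVec (fun q => hθ q - θ q) p|
          |(1 - γ • M πs)⁻¹.mulVec (fun q => hθ q - θ q) p|) ∧
    Finset.univ.sup' Finset.univ_nonempty (fun p : X × A => |θ p - θs p|) ≤
      max (Finset.univ.sup' Finset.univ_nonempty
            (fun p : X × A => |(1 - γ • M πθ)⁻¹.mulVec (fun q => hθ q - θ q) p|))
          (Finset.univ.sup' Finset.univ_nonempty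
            (fun p : X × A => |(1 - γ • M πs)⁻¹.mulVec (fun q => hθ q - θ q) p|)) := by
  obtain rfl : M = policyMatrix P := funext fun π => Matrix.ext (hM π)
  obtain rfl : hθ = bellman r P γ θ := funext hdef
  have hfix' : bellman r P γ θs = θs := (funext hfix).symm
  have hlower := inv_one_sub_mulVec_bellman_sub_le hγ0.le hγ1 hP0 hP1 hgreedyθ hgreedys hfix'
  have hupper := sub_le_inv_one_sub_mulVec_bellman_sub hγ0.le hγ1 hP0 hP1 hgreedyθ hgreedys hfix'
  have hentry : ∀ p, |θs p - θ p| ≤ max |((1 - γ • policyMatrix P πθ)⁻¹ *ᵥ (bellman r P γ θ - θ)) p|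
      |((1 - γ • policyMatrix P πs)⁻¹ *ᵥ (bellman r P γ θ - θ)) p| :=
    fun p => abs_le_max_abs_abs (hlower p) (hupper p)
  refine ⟨hentry, sup'_le _ _ fun p _ => ?_⟩
  rw [abs_sub_comm]
  exact (hentry p).trans (max_le_max (le_sup' (fun q => |_|) (mem_univ p))
    (le_sup' (fun q => |_|) (mem_univ p)))
end
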